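/- Let Γ be a finite labeled graph. Iterating folding and trimming operations on Γ terminates after finitely many steps in a folded core graph Core(Γ), and the resulting graph is independent of the order in which foldings and trimmings are performed. -/

import Mathlib

/-! Framework: Serre graphs with labels in `X ∪ X⁻¹` (encoded as `X × Bool`),
labeled-graph morphisms, paths, `π₁` as a set of elements of the free group,
folded graphs, core graphs, folding/trimming steps, edge subdivision along a
homomorphism (the functor `F_φ`), Whitehead graphs and the category FGR. -/

/-- A graph in the sense of Serre together with an `X`-labeling. -/
structure LGraph (X : Type) : Type 1 where
  V : Type
  E : Type
  init : E → V
  bar : E → E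
  bar_ne : ∀ e, bar e ≠ e
  bar_bar : ∀ e, bar (bar e) = e
  lab : E → X × Bool
  lab_bar : ∀ e, lab (bar e) = ((lab e).1, !(lab e).2)

namespace LGraph

variable {X : Type}

/-- Terminal vertex of an edge. -/
def term (Γ : LGraph X) (e : Γ.E) : Γ.V := Γ.init (Γ.bar e)

/-- The label of an edge as an element of the free group. -/
def labF (Γ : LGraph X) (e : Γ.E) : FreeGroup X :=
  cond (Γ.lab e).2 (FreeGroup.of (Γ.lab e).1) ((FreeGroup.of (Γ.lab e).1)⁻¹)

/-- `Γ.chain v p`: the list of edges `p` is a path starting at `v`. -/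
def chain (Γ : LGraph X) : Γ.V → List Γ.E → Prop
  | _, [] => True
  | v, e :: p => Γ.init e = v ∧ chain Γ (Γ.term e) p

/-- Endpoint of a path starting at `v`. -/
def endOf (Γ : LGraph X) (v : Γ.V) (p : List Γ.E) : Γ.V :=
  p.foldl (fun _ e => Γ.term e) v

/-- Label of a path, as an element of the free group. -/
def pathLabel (Γ : LGraph X) (p : List Γ.E) : FreeGroup X :=
  (p.map Γ.labF).prod

/-- A path is reduced if it never immediately backtracks. -/
def Reduced (Γ : LGraph X) (p : List Γ.E) : Prop :=
  p.Chain' (fun e f => f ≠ Γ.bar e)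

/-- `π₁` of a graph at a base vertex: labels of closed paths at `v`. -/
def pi1 (Γ : LGraph X) (v : Γ.V) : Set (FreeGroup X) :=
  { g | ∃ p, Γ.chain v p ∧ Γ.endOf v p = v ∧ Γ.pathLabel p = g }

/-- A labeled graph is folded if distinct edges with a common initial vertex
have distinct labels. -/
def Folded (Γ : LGraph X) : Prop :=
  ∀ e f : Γ.E, Γ.init e = Γ.init f → Γ.lab e = Γ.lab f → e = f

/-- Connectivity. -/
def Connected (Γ : LGraph X) : Prop :=
  ∀ v w : Γ.V, ∃ p, Γ.chain v p ∧ Γ.endOf v p = w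

/-- An (unpointed) core graph: folded, connected, every edge lies on a
reduced circuit (reduced closed path which is also cyclically reduced). -/
def IsUCore (Γ : LGraph X) : Prop :=
  Γ.Folded ∧ Γ.Connected ∧
    ∀ e : Γ.E, ∃ v p, Γ.chain v p ∧ Γ.endOf v p = v ∧ Γ.Reduced p ∧
      (∀ e₁ eₙ, p.head? = some e₁ → p.getLast? = some eₙ → e₁ ≠ Γ.bar eₙ) ∧ e ∈ p

end LGraph

/-- Formal inverse of a letter in `X ∪ X⁻¹`. -/
def letterInv {X : Type} (a : X × Bool) : X × Bool := (a.1, !a.2)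

namespace LGraph

variable {X : Type}

/-- A 2-path: a pair of consecutive edges `(e, f)` with `f ≠ ē`. -/
def TwoPath (Γ : LGraph X) (e f : Γ.E) : Prop :=
  Γ.init f = Γ.term e ∧ f ≠ Γ.bar e

/-- The Whitehead graph of a labeled graph, as a set of unordered pairs of
letters: the pairs `{l(e), l(f̄)}` over 2-paths `(e, f)`. -/
def W (Γ : LGraph X) : Set (Sym2 (X × Bool)) :=
  { s | ∃ e f, Γ.TwoPath e f ∧ s = Sym2.mk (Γ.lab e) (letterInv (Γ.lab f)) }

end LGraph

/-- The full Whitehead graph on `X`: all non-diagonal unordered pairs. -/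
def FullW (X : Type) : Set (Sym2 (X × Bool)) := { s | ¬ s.IsDiag }

/-- Morphism of labeled graphs. -/
structure LHom {X : Type} (Γ Δ : LGraph X) where
  mapV : Γ.V → Δ.V
  mapE : Γ.E → Δ.E
  map_init : ∀ e, Δ.init (mapE e) = mapV (Γ.init e)
  map_bar : ∀ e, Δ.bar (mapE e) = mapE (Γ.bar e)
  map_lab : ∀ e, Δ.lab (mapE e) = Γ.lab e

/-- Pointed labeled graph. -/
structure PLGraph (X : Type) extends LGraph X where
  base : V

/-- Morphism of pointed labeled graphs. -/
structure PHom {X : Type} (Γ Δ : PLGraph X) extends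
    LHom Γ.toLGraph Δ.toLGraph where
  map_base : mapV Γ.base = Δ.base

namespace PLGraph

variable {X : Type}

/-- `π₁` of a pointed graph at its base point. -/
def pi1S (Γ : PLGraph X) : Set (FreeGroup X) := Γ.toLGraph.pi1 Γ.base

/-- A pointed core graph: folded, connected, and every edge lies on a reduced
closed path through the base point. -/
def IsCore (Γ : PLGraph X) : Prop :=
  Γ.toLGraph.Folded ∧ Γ.toLGraph.Connected ∧
    ∀ e : Γ.E, ∃ p, Γ.toLGraph.chain Γ.base p ∧
      Γ.toLGraph.endOf Γ.base p = Γ.base ∧ Γ.toLGraph.Reduced p ∧ e ∈ p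

end PLGraph

/-- `Δ` is obtained from `Γ` by one folding: identifying two distinct edges
`e₁, e₂` with the same initial vertex and the same label (and their inverses,
and their terminal vertices). -/
structure FoldStep {X : Type} (Γ Δ : LGraph X) where
  f : LHom Γ Δ
  e₁ : Γ.E
  e₂ : Γ.E
  ne : e₁ ≠ e₂
  init_eq : Γ.init e₁ = Γ.init e₂
  lab_eq : Γ.lab e₁ = Γ.lab e₂
  surjV : Function.Surjective f.mapV
  surjE : Function.Surjective f.mapE
  glueE : f.mapE e₁ = f.mapE e₂
  injE : ∀ d d', f.mapE d = f.mapE d' →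
    d = d' ∨ ({d, d'} : Set Γ.E) = {e₁, e₂} ∨
      ({d, d'} : Set Γ.E) = {Γ.bar e₁, Γ.bar e₂}
  injV : ∀ v w, f.mapV v = f.mapV w →
    v = w ∨ ({v, w} : Set Γ.V) = {Γ.term e₁, Γ.term e₂}

/-- `Δ` is obtained from `Γ` by one trimming: deleting a degree-one vertex
`v` together with its edge pair `{e, ē}`; `j` is the inclusion of `Δ` in `Γ`. -/
structure TrimStep {X : Type} (Γ Δ : LGraph X) where
  j : LHom Δ Γ
  v : Γ.V
  e : Γ.E
  init_e : Γ.init e = v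
  deg_one : ∀ d, Γ.init d = v → d = e
  injV : Function.Injective j.mapV
  injE : Function.Injective j.mapE
  rangeV : Set.range j.mapV = {w | w ≠ v}
  rangeE : Set.range j.mapE = {d | d ≠ e ∧ d ≠ Γ.bar e}

/-- Pointed folding step. -/
def PFold {X : Type} (Γ Δ : PLGraph X) : Prop :=
  ∃ F : FoldStep Γ.toLGraph Δ.toLGraph, F.f.mapV Γ.base = Δ.base

/-- Pointed trimming step (the trimmed vertex is not the base point). -/
def PTrim {X : Type} (Γ Δ : PLGraph X) : Prop :=
  ∃ T : TrimStep Γ.toLGraph Δ.toLGraph, T.v ≠ Γ.base ∧ T.j.mapV Δ.base = Γ.base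

/-- One folding or trimming step on pointed graphs. -/
def PStep {X : Type} (Γ Δ : PLGraph X) : Prop := PFold Γ Δ ∨ PTrim Γ Δ

/-- One folding or trimming step on unpointed graphs. -/
def UStep {X : Type} (Γ Δ : LGraph X) : Prop :=
  Nonempty (FoldStep Γ Δ) ∨ Nonempty (TrimStep Γ Δ)

/-- `Δ` is the subdivision of the `Y`-labeled graph `Γ` along
`φ : Y → FreeGroup X`: each edge `e` is replaced by a fresh path spelling the
reduced word of `φ` applied to the label of `e` (the functor `F_φ`). -/
structure Subdiv {Y X : Type} [DecidableEq X] (φ : Y → FreeGroup X)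
    (Γ : LGraph Y) (Δ : LGraph X) where
  vmap : Γ.V → Δ.V
  emap : Γ.E → List Δ.E
  vmap_inj : Function.Injective vmap
  emap_ne : ∀ e, emap e ≠ []
  emap_chain : ∀ e, Δ.chain (vmap (Γ.init e)) (emap e)
  emap_end : ∀ e, Δ.endOf (vmap (Γ.init e)) (emap e) = vmap (Γ.term e)
  emap_bar : ∀ e, emap (Γ.bar e) = ((emap e).reverse).map Δ.bar
  emap_spell : ∀ e, (emap e).map Δ.lab = (FreeGroup.lift φ (Γ.labF e)).toWord
  emap_nodup : ∀ e, (emap e).Nodup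
  emap_nobar : ∀ e d, d ∈ emap e → Δ.bar d ∉ emap e
  emap_disj : ∀ e e', e' ≠ e → e' ≠ Γ.bar e → ∀ d, d ∈ emap e → d ∉ emap e'
  cover_e : ∀ d : Δ.E, ∃ e, d ∈ emap e
  interior : ∀ w : Δ.V, w ∉ Set.range vmap →
    ∃ d₁ d₂ : Δ.E, d₁ ≠ d₂ ∧ Δ.init d₁ = w ∧ Δ.init d₂ = w ∧
      ∀ d, Δ.init d = w → d = d₁ ∨ d = d₂

/-- Whitehead pairs read along a word: `{wᵢ, wᵢ₊₁⁻¹}` over consecutive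
letters. -/
def wordW {X : Type} (l : List (X × Bool)) : Set (Sym2 (X × Bool)) :=
  { s | ∃ l₁ a b l₂, l = l₁ ++ a :: b :: l₂ ∧ s = Sym2.mk a (letterInv b) }

/-- The image of a letter under (the extension of) `φ`. -/
def letterIm {Y X : Type} (φ : Y → FreeGroup X) (a : Y × Bool) : FreeGroup X :=
  cond a.2 (φ a.1) (φ a.1)⁻¹

/-- A morphism in the category FGR of free groups with restrictions, from
`(Y, N)` to `(X, M)`: a non-degenerate homomorphism `F_Y → F_X` (given on the
basis `Y`) satisfying conditions (i)–(iv). -/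
structure FGRHom (Y X : Type) [DecidableEq X] (N : Set (Sym2 (Y × Bool)))
    (M : Set (Sym2 (X × Bool))) where
  φ : Y → FreeGroup X
  nondeg : ∀ y, φ y ≠ 1
  whitehead : ∀ y, wordW (φ y).toWord ⊆ M
  lastLetter : ∀ a b : Y × Bool, Sym2.mk a b ∈ N →
    ∃ ta tb, (letterIm φ a).toWord.getLast? = some ta ∧
      (letterIm φ b).toWord.getLast? = some tb ∧ ta ≠ tb ∧ Sym2.mk ta tb ∈ M

/-- No cancellation in the product of two (reduced) words. -/
def NoCancel {X : Type} [DecidableEq X] (p q : FreeGroup X) : Prop :=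
  (p * q).toWord = p.toWord ++ q.toWord

/-- A word is cyclically reduced: its last letter is not the inverse of its
first letter. -/
def CycRed {X : Type} [DecidableEq X] (w : FreeGroup X) : Prop :=
  ∀ a b, w.toWord.head? = some a → w.toWord.getLast? = some b → b ≠ (a.1, !a.2)

/-!
Each folding or trimming removes edges, so every sequence of steps is finite. A graph admitting
no step is folded and has no vertex of degree one other than the base point; walking away from
the base point until a geodesic back does not backtrack shows that every edge lies on a reduced
loop at the base point, so such a graph is a core graph.

Both steps preserve `π₁` at the base point. In a folded graph at most one path from a vertex
reads a given word, and the word read along a reduced path is the reduced word of its label.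
Hence a core graph `Δ` maps to every folded graph whose `π₁` contains that of `Δ`, and a pointed
morphism from a connected graph to a folded one is unique. Two terminal graphs reached from `Γ`
are core graphs with the same `π₁`, so the morphisms between them in both directions are mutually
inverse.
-/

namespace LGraph

variable {X : Type} {Γ : LGraph X}

@[simp] lemma chain_nil (v : Γ.V) : Γ.chain v [] := trivial

@[simp] lemma chain_cons {v : Γ.V} {e : Γ.E} {p : List Γ.E} :
    Γ.chain v (e :: p) ↔ Γ.init e = v ∧ Γ.chain (Γ.term e) p := Iff.rfl

@[simp] lemma endOf_nil (v : Γ.V) : Γ.endOf v [] = v := rfl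

@[simp] lemma endOf_cons (v : Γ.V) (e : Γ.E) (p : List Γ.E) :
    Γ.endOf v (e :: p) = Γ.endOf (Γ.term e) p := rfl

lemma endOf_append (v : Γ.V) (p q : List Γ.E) :
    Γ.endOf v (p ++ q) = Γ.endOf (Γ.endOf v p) q := by
  simp [endOf, List.foldl_append]

lemma chain_append {v : Γ.V} {p q : List Γ.E} :
    Γ.chain v (p ++ q) ↔ Γ.chain v p ∧ Γ.chain (Γ.endOf v p) q := by
  induction p generalizing v with
  | nil => simp
  | cons e p ih => simp [ih, and_assoc]

@[simp] lemma pathLabel_nil : Γ.pathLabel [] = 1 := rfl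

@[simp] lemma pathLabel_cons (e : Γ.E) (p : List Γ.E) :
    Γ.pathLabel (e :: p) = Γ.labF e * Γ.pathLabel p := by
  simp [pathLabel]

@[simp] lemma pathLabel_append (p q : List Γ.E) :
    Γ.pathLabel (p ++ q) = Γ.pathLabel p * Γ.pathLabel q := by
  simp [pathLabel]

@[simp] lemma bar_inj {e f : Γ.E} : Γ.bar e = Γ.bar f ↔ e = f :=
  ⟨fun h => by simpa [Γ.bar_bar] using congrArg Γ.bar h, congrArg Γ.bar⟩

lemma eq_bar_iff {e f : Γ.E} : e = Γ.bar f ↔ Γ.bar e = f := by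
  rw [← bar_inj, Γ.bar_bar]

@[simp] lemma term_bar (e : Γ.E) : Γ.term (Γ.bar e) = Γ.init e := by
  simp [term, Γ.bar_bar]

@[simp] lemma labF_bar (e : Γ.E) : Γ.labF (Γ.bar e) = (Γ.labF e)⁻¹ := by
  simp only [labF, Γ.lab_bar]
  cases (Γ.lab e).2 <;> simp

lemma labF_eq_of_lab_eq {Δ : LGraph X} {d : Γ.E} {d' : Δ.E} (h : Δ.lab d' = Γ.lab d) :
    Δ.labF d' = Γ.labF d := by
  simp only [labF, h]

lemma pathLabel_eq_mk (p : List Γ.E) : Γ.pathLabel p = FreeGroup.mk (p.map Γ.lab) := by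
  induction p with
  | nil => rfl
  | cons e p ih =>
    rw [pathLabel_cons, ih, List.map_cons, ← List.singleton_append, ← FreeGroup.mul_mk]
    congr 1
    rcases h : Γ.lab e with ⟨x, _ | _⟩ <;>
      simp [labF, h, FreeGroup.of, FreeGroup.inv_mk, FreeGroup.invRev]

lemma reduced_cons {e : Γ.E} {p : List Γ.E} :
    Γ.Reduced (e :: p) ↔ (∀ f ∈ p.head?, f ≠ Γ.bar e) ∧ Γ.Reduced p :=
  List.isChain_cons

lemma Reduced.tail {e : Γ.E} {p : List Γ.E} (h : Γ.Reduced (e :: p)) : Γ.Reduced p :=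
  (reduced_cons.mp h).2

/-- The reverse path `p⁻¹`. -/
def barRev (Γ : LGraph X) (p : List Γ.E) : List Γ.E := (p.map Γ.bar).reverse

@[simp] lemma barRev_cons (e : Γ.E) (p : List Γ.E) :
    Γ.barRev (e :: p) = Γ.barRev p ++ [Γ.bar e] := by
  simp [barRev]

lemma chain_barRev {v : Γ.V} {p : List Γ.E} (h : Γ.chain v p) :
    Γ.chain (Γ.endOf v p) (Γ.barRev p) ∧ Γ.endOf (Γ.endOf v p) (Γ.barRev p) = v := by
  induction p generalizing v with
  | nil => simp [barRev]
  | cons e p ih =>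
    obtain ⟨rfl, hp⟩ := h
    obtain ⟨hc, hend⟩ := ih hp
    simp_all [chain_append, endOf_append, term, Γ.bar_bar]

@[simp] lemma pathLabel_barRev (p : List Γ.E) :
    Γ.pathLabel (Γ.barRev p) = (Γ.pathLabel p)⁻¹ := by
  induction p with
  | nil => simp [barRev]
  | cons e p ih => simp [ih]

lemma Reduced.barRev {p : List Γ.E} (h : Γ.Reduced p) : Γ.Reduced (Γ.barRev p) := by
  unfold Reduced LGraph.barRev
  rw [List.Chain', List.isChain_reverse, List.isChain_map]
  exact h.imp fun a b hab hc => hab (by rw [hc, Γ.bar_bar])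

lemma exists_reduced {v : Γ.V} {p : List Γ.E} (hp : Γ.chain v p) :
    ∃ q, Γ.chain v q ∧ Γ.endOf v q = Γ.endOf v p ∧ Γ.Reduced q ∧
      Γ.pathLabel q = Γ.pathLabel p ∧ q.length ≤ p.length := by
  induction p generalizing v with
  | nil => exact ⟨[], trivial, rfl, List.isChain_nil, rfl, le_rfl⟩
  | cons e p ih =>
    obtain ⟨rfl, hp⟩ := hp
    obtain ⟨q, hq, hend, hred, hlab, hlen⟩ := ih hp
    by_cases hback : ∃ q', q = Γ.bar e :: q'
    · obtain ⟨q', rfl⟩ := hback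
      refine ⟨q', by simpa using hq.2, by simp [← hend], hred.tail, by simp [← hlab], ?_⟩
      simp only [List.length_cons] at hlen ⊢
      omega
    · refine ⟨e :: q, ⟨rfl, hq⟩, hend, reduced_cons.mpr ⟨?_, hred⟩, by simp [hlab],
        by simpa using hlen⟩
      rintro f hf rfl
      exact hback ⟨q.tail, by cases q <;> simp_all⟩

end LGraph

namespace LGraph.Folded

variable {X : Type} {Γ : LGraph X}

lemma isReduced_map_lab (hF : Γ.Folded) {v : Γ.V} {p : List Γ.E} (hc : Γ.chain v p)
    (hr : Γ.Reduced p) : FreeGroup.IsReduced (p.map Γ.lab) := by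
  induction p generalizing v with
  | nil => exact FreeGroup.IsReduced.nil
  | cons e p ih =>
    cases p with
    | nil => exact FreeGroup.IsReduced.singleton
    | cons f p =>
      rw [List.map_cons, List.map_cons, FreeGroup.isReduced_cons_cons]
      refine ⟨fun h1 => ?_, ih hc.2 hr.tail⟩
      by_contra h2
      refine (reduced_cons.mp hr).1 f rfl (hF f (Γ.bar e) hc.2.1 ?_)
      rw [Γ.lab_bar]
      exact Prod.ext h1.symm (by revert h2; cases (Γ.lab e).2 <;> cases (Γ.lab f).2 <;> simp)

lemma map_lab_eq_toWord [DecidableEq X] (hF : Γ.Folded) {v : Γ.V} {p : List Γ.E}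
    (hc : Γ.chain v p) (hr : Γ.Reduced p) : p.map Γ.lab = (Γ.pathLabel p).toWord := by
  rw [pathLabel_eq_mk, FreeGroup.toWord_mk, (hF.isReduced_map_lab hc hr).reduce_eq]

lemma eq_of_map_lab_eq (hF : Γ.Folded) {v : Γ.V} {p q : List Γ.E} (hp : Γ.chain v p)
    (hq : Γ.chain v q) (h : p.map Γ.lab = q.map Γ.lab) : p = q := by
  induction p generalizing v q with
  | nil => simpa [eq_comm] using h
  | cons e p ih =>
    obtain _ | ⟨f, q⟩ := q
    · simp at h
    · simp only [List.map_cons, List.cons.injEq] at h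
      obtain rfl := hF e f (hp.1.trans hq.1.symm) h.1
      rw [ih hp.2 hq.2 h.2]

/-- Reduce both paths: a reduced path of a folded graph is determined by its label. -/
lemma endOf_eq_of_pathLabel_eq (hF : Γ.Folded) {v : Γ.V} {p q : List Γ.E}
    (hp : Γ.chain v p) (hq : Γ.chain v q) (h : Γ.pathLabel p = Γ.pathLabel q) :
    Γ.endOf v p = Γ.endOf v q := by
  classical
  obtain ⟨p', hp', hpe, hpr, hpl, -⟩ := exists_reduced hp
  obtain ⟨q', hq', hqe, hqr, hql, -⟩ := exists_reduced hq
  rw [← hpe, ← hqe, hF.eq_of_map_lab_eq hp' hq' (by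
    rw [hF.map_lab_eq_toWord hp' hpr, hF.map_lab_eq_toWord hq' hqr, hpl, hql, h])]

end LGraph.Folded

namespace LHom

variable {X : Type} {Γ Δ Ξ : LGraph X}

protected def id (Γ : LGraph X) : LHom Γ Γ :=
  ⟨id, id, fun _ => rfl, fun _ => rfl, fun _ => rfl⟩

def comp (g : LHom Δ Ξ) (f : LHom Γ Δ) : LHom Γ Ξ where
  mapV := g.mapV ∘ f.mapV
  mapE := g.mapE ∘ f.mapE
  map_init e := by simp [g.map_init, f.map_init]
  map_bar e := by simp [g.map_bar, f.map_bar]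
  map_lab e := by simp [g.map_lab, f.map_lab]

variable (h : LHom Γ Δ)

lemma map_term (e : Γ.E) : Δ.term (h.mapE e) = h.mapV (Γ.term e) := by
  rw [LGraph.term, h.map_bar, h.map_init, LGraph.term]

lemma chain_map {v : Γ.V} {p : List Γ.E} (hc : Γ.chain v p) :
    Δ.chain (h.mapV v) (p.map h.mapE) := by
  induction p generalizing v with
  | nil => trivial
  | cons e p ih => exact ⟨by rw [h.map_init, hc.1], by rw [h.map_term]; exact ih hc.2⟩

lemma endOf_map (v : Γ.V) (p : List Γ.E) :
    Δ.endOf (h.mapV v) (p.map h.mapE) = h.mapV (Γ.endOf v p) := by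
  induction p generalizing v with
  | nil => rfl
  | cons e p ih => simp [h.map_term, ih]

lemma pathLabel_map (p : List Γ.E) : Δ.pathLabel (p.map h.mapE) = Γ.pathLabel p := by
  induction p with
  | nil => rfl
  | cons e p ih => simp [ih, LGraph.labF_eq_of_lab_eq (h.map_lab e)]

lemma pi1_subset (v : Γ.V) : Γ.pi1 v ⊆ Δ.pi1 (h.mapV v) := by
  rintro g ⟨p, hc, he, rfl⟩
  exact ⟨p.map h.mapE, h.chain_map hc, by rw [h.endOf_map, he], h.pathLabel_map p⟩

lemma connected_of_surjective (hc : Γ.Connected) (hV : Function.Surjective h.mapV) :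
    Δ.Connected := by
  intro v w
  obtain ⟨v, rfl⟩ := hV v
  obtain ⟨w, rfl⟩ := hV w
  obtain ⟨p, hp, rfl⟩ := hc v w
  exact ⟨p.map h.mapE, h.chain_map hp, h.endOf_map v p⟩

lemma exists_chain_of_forall_mem_range (hV : Function.Injective h.mapV) {u : Γ.V}
    {p : List Δ.E} (hc : Δ.chain (h.mapV u) p) (hp : ∀ d ∈ p, d ∈ Set.range h.mapE) :
    ∃ q, Γ.chain u q ∧ q.map h.mapE = p := by
  induction p generalizing u with
  | nil => exact ⟨[], trivial, rfl⟩
  | cons d p ih =>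
    obtain ⟨d, rfl⟩ := hp _ List.mem_cons_self
    obtain ⟨q, hq, rfl⟩ := ih (by rw [← h.map_term]; exact hc.2)
      fun x hx => hp x (List.mem_cons_of_mem _ hx)
    exact ⟨d :: q, ⟨hV (by rw [← h.map_init, hc.1]), hq⟩, rfl⟩

end LHom

namespace PHom

variable {X : Type} {Γ Δ Ξ : PLGraph X}

protected def id (Γ : PLGraph X) : PHom Γ Γ := ⟨LHom.id Γ.toLGraph, rfl⟩

def comp (g : PHom Δ Ξ) (f : PHom Γ Δ) : PHom Γ Ξ :=
  ⟨g.toLHom.comp f.toLHom, by simp [LHom.comp, f.map_base, g.map_base]⟩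

/-- Both morphisms send the end of a path from the base point to the end of the unique path
with the same labels. -/
lemma map_eq_of_folded (hc : Γ.toLGraph.Connected) (hF : Δ.toLGraph.Folded) (f g : PHom Γ Δ) :
    f.mapV = g.mapV ∧ f.mapE = g.mapE := by
  have hV : f.mapV = g.mapV := by
    funext v
    obtain ⟨p, hp, rfl⟩ := hc Γ.base v
    have hf := f.chain_map hp
    have hg := g.chain_map hp
    rw [f.map_base] at hf
    rw [g.map_base] at hg
    rw [← f.endOf_map, ← g.endOf_map, f.map_base, g.map_base,
      hF.eq_of_map_lab_eq hf hg (by simp [Function.comp_def, f.map_lab, g.map_lab])]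
  refine ⟨hV, funext fun e => hF _ _ ?_ ?_⟩
  · rw [f.map_init, g.map_init, hV]
  · rw [f.map_lab, g.map_lab]

lemma bijective_of_folded (hc : Γ.toLGraph.Connected) (hF : Γ.toLGraph.Folded)
    (hc' : Δ.toLGraph.Connected) (hF' : Δ.toLGraph.Folded) (f : PHom Γ Δ) (g : PHom Δ Γ) :
    Function.Bijective f.mapV ∧ Function.Bijective f.mapE := by
  obtain ⟨hgfV, hgfE⟩ := map_eq_of_folded hc hF (g.comp f) (PHom.id Γ)
  obtain ⟨hfgV, hfgE⟩ := map_eq_of_folded hc' hF' (f.comp g) (PHom.id Δ)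
  exact ⟨Function.bijective_iff_has_inverse.mpr ⟨g.mapV, congrFun hgfV, congrFun hfgV⟩,
    Function.bijective_iff_has_inverse.mpr ⟨g.mapE, congrFun hgfE, congrFun hfgE⟩⟩

end PHom

namespace FoldStep

variable {X : Type} {Γ Δ : LGraph X}

lemma card_lt (F : FoldStep Γ Δ) [Finite Γ.E] : Nat.card Δ.E < Nat.card Γ.E := by
  have : Finite Δ.E := .of_surjective _ F.surjE
  have := Fintype.ofFinite Γ.E
  have := Fintype.ofFinite Δ.E
  simpa only [Nat.card_eq_fintype_card] using Fintype.card_lt_of_surjective_not_injective _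
    F.surjE fun hinj => F.ne (hinj F.glueE)

/-- If `u = τ(a)` and `u' = τ(b)` with `a, b ∈ {e₁, e₂}`, the path `ā b` has trivial
label. -/
lemma exists_path_of_mapV_eq (F : FoldStep Γ Δ) {u u' : Γ.V} (h : F.f.mapV u = F.f.mapV u') :
    ∃ p, Γ.chain u p ∧ Γ.endOf u p = u' ∧ Γ.pathLabel p = 1 := by
  rcases F.injV u u' h with rfl | hset
  · exact ⟨[], trivial, rfl, rfl⟩
  have hterm : ∀ w ∈ ({u, u'} : Set Γ.V),
      ∃ a, (a = F.e₁ ∨ a = F.e₂) ∧ w = Γ.term a := by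
    rw [hset]
    rintro w (rfl | rfl)
    exacts [⟨_, Or.inl rfl, rfl⟩, ⟨_, Or.inr rfl, rfl⟩]
  obtain ⟨a, ha, rfl⟩ := hterm u (by simp)
  obtain ⟨b, hb, rfl⟩ := hterm u' (by simp)
  have hinit : Γ.init a = Γ.init b := by
    rcases ha with rfl | rfl <;> rcases hb with rfl | rfl <;> simp [F.init_eq]
  have hlab : Γ.labF a = Γ.labF b := by
    rcases ha with rfl | rfl <;> rcases hb with rfl | rfl <;> simp [LGraph.labF, F.lab_eq]
  exact ⟨[Γ.bar a, b], ⟨rfl, by rw [LGraph.term_bar, hinit], trivial⟩, rfl, by simp [hlab]⟩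

lemma exists_lift (F : FoldStep Γ Δ) {w : Δ.V} {q : List Δ.E} (hq : Δ.chain w q)
    {u : Γ.V} (hu : F.f.mapV u = w) :
    ∃ p, Γ.chain u p ∧ F.f.mapV (Γ.endOf u p) = Δ.endOf w q ∧
      Γ.pathLabel p = Δ.pathLabel q := by
  induction q generalizing u w with
  | nil => exact ⟨[], trivial, hu, rfl⟩
  | cons d q ih =>
    obtain ⟨d, rfl⟩ := F.surjE d
    obtain ⟨hd, hq⟩ := hq
    obtain ⟨r, hr, hre, hrl⟩ := F.exists_path_of_mapV_eq (u := u) (u' := Γ.init d)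
      (by rw [hu, ← hd, F.f.map_init])
    obtain ⟨p, hp, hpe, hpl⟩ := ih hq (F.f.map_term d).symm
    refine ⟨r ++ d :: p, ?_, ?_, ?_⟩
    · rw [LGraph.chain_append, hre]
      exact ⟨hr, rfl, hp⟩
    · rw [LGraph.endOf_append, hre, LGraph.endOf_cons, hpe, LGraph.endOf_cons]
    · simp [hrl, hpl, LGraph.labF_eq_of_lab_eq (F.f.map_lab d)]

lemma pi1_eq (F : FoldStep Γ Δ) (v : Γ.V) : Δ.pi1 (F.f.mapV v) = Γ.pi1 v := by
  refine Set.Subset.antisymm ?_ (F.f.pi1_subset v)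
  rintro g ⟨q, hq, hqe, rfl⟩
  obtain ⟨p, hp, hpe, hpl⟩ := F.exists_lift hq rfl
  obtain ⟨r, hr, hre, hrl⟩ := F.exists_path_of_mapV_eq (hpe.trans hqe)
  refine ⟨p ++ r, LGraph.chain_append.mpr ⟨hp, hr⟩, by rw [LGraph.endOf_append, hre], ?_⟩
  simp [hrl, hpl]

end FoldStep

namespace TrimStep

variable {X : Type} {Γ Δ : LGraph X}

lemma card_lt (T : TrimStep Γ Δ) [Finite Γ.E] : Nat.card Δ.E < Nat.card Γ.E := by
  have : Finite Δ.E := .of_injective _ T.injE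
  have := Fintype.ofFinite Γ.E
  have := Fintype.ofFinite Δ.E
  simpa only [Nat.card_eq_fintype_card] using
    Fintype.card_lt_of_injective_of_notMem _ T.injE (b := T.e) (by simp [T.rangeE])

/-- A reduced path can only leave the degree-one vertex `v`, never pass through it. -/
lemma mem_range_of_reduced (T : TrimStep Γ Δ) {w : Γ.V} {p : List Γ.E} (hc : Γ.chain w p)
    (hr : Γ.Reduced p) (hw : w ≠ T.v) (hend : Γ.endOf w p ≠ T.v) :
    ∀ d ∈ p, d ∈ Set.range T.j.mapE := by
  induction p generalizing w with
  | nil => simp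
  | cons d p ih =>
    obtain ⟨rfl, hc⟩ := hc
    have hde : d ≠ T.e := by rintro rfl; exact hw T.init_e
    have hterm : Γ.term d ≠ T.v := by
      intro h
      obtain _ | ⟨d', p⟩ := p
      · exact hend h
      · exact (LGraph.reduced_cons.mp hr).1 d' rfl
          ((T.deg_one d' (hc.1.trans h)).trans (T.deg_one (Γ.bar d) h).symm)
    have hdb : d ≠ Γ.bar T.e := by rintro rfl; simp [T.init_e] at hterm
    intro d' hd'
    rcases List.mem_cons.mp hd' with rfl | hd'
    · rw [T.rangeE]; exact ⟨hde, hdb⟩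
    · exact ih hc hr.tail hterm hend d' hd'

lemma exists_lift (T : TrimStep Γ Δ) {u u' : Δ.V} {p : List Γ.E}
    (hc : Γ.chain (T.j.mapV u) p) (he : Γ.endOf (T.j.mapV u) p = T.j.mapV u') :
    ∃ q, Δ.chain u q ∧ Δ.endOf u q = u' ∧ Δ.pathLabel q = Γ.pathLabel p := by
  have hne : ∀ w, T.j.mapV w ≠ T.v := fun w => by
    simpa [T.rangeV] using Set.mem_range_self (f := T.j.mapV) w
  obtain ⟨p', hc', he', hr', hl', -⟩ := LGraph.exists_reduced hc
  obtain ⟨q, hq, rfl⟩ := T.j.exists_chain_of_forall_mem_range T.injV hc'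
    (T.mem_range_of_reduced hc' hr' (hne u) (by rw [he', he]; exact hne u'))
  refine ⟨q, hq, T.injV ?_, by rw [← hl', T.j.pathLabel_map]⟩
  rw [← T.j.endOf_map, he', he]

lemma connected (T : TrimStep Γ Δ) (hc : Γ.Connected) : Δ.Connected := fun u u' => by
  obtain ⟨p, hp, he⟩ := hc (T.j.mapV u) (T.j.mapV u')
  obtain ⟨q, hq, hqe, -⟩ := T.exists_lift hp he
  exact ⟨q, hq, hqe⟩

lemma pi1_eq (T : TrimStep Γ Δ) (u : Δ.V) : Δ.pi1 u = Γ.pi1 (T.j.mapV u) := by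
  refine Set.Subset.antisymm (T.j.pi1_subset u) ?_
  rintro g ⟨p, hp, he, rfl⟩
  exact T.exists_lift hp he

end TrimStep

namespace LGraph

variable {X : Type}

def image (Γ : LGraph X) (rV : Γ.V → Γ.V) (rE : Γ.E → Γ.E)
    (hbar : ∀ d, Γ.bar (rE d) = rE (Γ.bar d)) : LGraph X where
  V := Set.range rV
  E := Set.range rE
  init d := Set.rangeFactorization rV (Γ.init d)
  bar d := ⟨Γ.bar d, by obtain ⟨x, hx⟩ := d.2; exact ⟨Γ.bar x, by rw [← hbar, hx]⟩⟩
  bar_ne d h := Γ.bar_ne d (congrArg Subtype.val h)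
  bar_bar d := Subtype.ext (Γ.bar_bar d)
  lab d := Γ.lab d
  lab_bar d := Γ.lab_bar d

def toImage (Γ : LGraph X) (rV : Γ.V → Γ.V) (rE : Γ.E → Γ.E)
    (hbar : ∀ d, Γ.bar (rE d) = rE (Γ.bar d))
    (hinit : ∀ d, rV (Γ.init (rE d)) = rV (Γ.init d)) (hlab : ∀ d, Γ.lab (rE d) = Γ.lab d) :
    LHom Γ (Γ.image rV rE hbar) where
  mapV := Set.rangeFactorization rV
  mapE := Set.rangeFactorization rE
  map_init d := Subtype.ext (hinit d)
  map_bar d := Subtype.ext (hbar d)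
  map_lab := hlab

open scoped Classical in
noncomputable def foldE (Γ : LGraph X) (e₁ e₂ : Γ.E) (d : Γ.E) : Γ.E :=
  if d = e₂ then e₁ else if d = Γ.bar e₂ then Γ.bar e₁ else d

open scoped Classical in
noncomputable def foldV (Γ : LGraph X) (e₁ e₂ : Γ.E) (v : Γ.V) : Γ.V :=
  if v = Γ.term e₂ then Γ.term e₁ else v

variable {Γ : LGraph X} {e₁ e₂ : Γ.E}

lemma ne_bar_of_lab_eq (h : Γ.lab e₁ = Γ.lab e₂) : e₁ ≠ Γ.bar e₂ := by
  rintro rfl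
  simpa [Γ.lab_bar] using congrArg Prod.snd h

lemma foldE_bar (h : Γ.lab e₁ = Γ.lab e₂) (d : Γ.E) :
    Γ.bar (Γ.foldE e₁ e₂ d) = Γ.foldE e₁ e₂ (Γ.bar d) := by
  have := ne_bar_of_lab_eq h
  unfold foldE
  split_ifs <;> simp_all [eq_bar_iff, Γ.bar_bar, Γ.bar_ne]

lemma foldV_init (h : Γ.init e₁ = Γ.init e₂) (d : Γ.E) :
    Γ.foldV e₁ e₂ (Γ.init (Γ.foldE e₁ e₂ d)) = Γ.foldV e₁ e₂ (Γ.init d) := by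
  by_cases h₁ : d = e₂
  · simp [foldE, h₁, h]
  by_cases h₂ : d = Γ.bar e₂
  · subst h₂
    rw [show Γ.foldE e₁ e₂ (Γ.bar e₂) = Γ.bar e₁ by simp [foldE, Γ.bar_ne]]
    show Γ.foldV e₁ e₂ (Γ.term e₁) = Γ.foldV e₁ e₂ (Γ.term e₂)
    simp [foldV]
  · simp [foldE, h₁, h₂]

lemma lab_foldE (h : Γ.lab e₁ = Γ.lab e₂) (d : Γ.E) :
    Γ.lab (Γ.foldE e₁ e₂ d) = Γ.lab d := by
  unfold foldE
  split_ifs <;> simp_all [Γ.lab_bar]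

noncomputable def foldStep (hne : e₁ ≠ e₂) (hinit : Γ.init e₁ = Γ.init e₂)
    (hlab : Γ.lab e₁ = Γ.lab e₂) :
    FoldStep Γ (Γ.image (Γ.foldV e₁ e₂) (Γ.foldE e₁ e₂) (foldE_bar hlab)) where
  f := Γ.toImage _ _ (foldE_bar hlab) (foldV_init hinit) (lab_foldE hlab)
  e₁ := e₁
  e₂ := e₂
  ne := hne
  init_eq := hinit
  lab_eq := hlab
  surjV := Set.rangeFactorization_surjective
  surjE := Set.rangeFactorization_surjective
  glueE := by
    have := ne_bar_of_lab_eq hlab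
    apply Subtype.ext
    simp_all [toImage, Set.rangeFactorization, foldE]
  injE d d' h := by
    have := ne_bar_of_lab_eq hlab
    replace h := congrArg Subtype.val h
    simp only [toImage, Set.rangeFactorization, foldE] at h
    split_ifs at h <;> subst_vars <;> simp_all [Set.pair_comm, eq_bar_iff, Γ.bar_bar, Γ.bar_ne]
  injV v w h := by
    replace h := congrArg Subtype.val h
    simp only [toImage, Set.rangeFactorization, foldV] at h
    split_ifs at h <;> subst_vars <;> simp_all [Set.pair_comm]

def trim (Γ : LGraph X) (v : Γ.V) (e : Γ.E) (hdeg : ∀ d, Γ.init d = v → d = e) :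
    LGraph X where
  V := {w : Γ.V // w ≠ v}
  E := {d : Γ.E // d ≠ e ∧ d ≠ Γ.bar e}
  init d := ⟨Γ.init d, fun h => d.2.1 (hdeg d h)⟩
  bar d := ⟨Γ.bar d, fun h => d.2.2 (eq_bar_iff.mpr h), fun h => d.2.1 (bar_inj.mp h)⟩
  bar_ne d h := Γ.bar_ne d (congrArg Subtype.val h)
  bar_bar d := Subtype.ext (Γ.bar_bar d)
  lab d := Γ.lab d
  lab_bar d := Γ.lab_bar d

def trimStep {v : Γ.V} {e : Γ.E} (hv : Γ.init e = v) (hdeg : ∀ d, Γ.init d = v → d = e) :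
    TrimStep Γ (Γ.trim v e hdeg) where
  j := ⟨Subtype.val, Subtype.val, fun _ => rfl, fun _ => rfl, fun _ => rfl⟩
  v := v
  e := e
  init_e := hv
  deg_one := hdeg
  injV := Subtype.val_injective
  injE := Subtype.val_injective
  rangeV := Subtype.range_val
  rangeE := Subtype.range_val

end LGraph

namespace PStep

variable {X : Type} {Γ Δ : PLGraph X}

lemma finite_E (h : PStep Γ Δ) [Finite Γ.E] : Finite Δ.E := by
  rcases h with ⟨F, -⟩ | ⟨T, -⟩
  exacts [.of_surjective _ F.surjE, .of_injective _ T.injE]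

lemma finite_V (h : PStep Γ Δ) [Finite Γ.V] : Finite Δ.V := by
  rcases h with ⟨F, -⟩ | ⟨T, -⟩
  exacts [.of_surjective _ F.surjV, .of_injective _ T.injV]

lemma card_lt (h : PStep Γ Δ) [Finite Γ.E] : Nat.card Δ.E < Nat.card Γ.E := by
  rcases h with ⟨F, -⟩ | ⟨T, -⟩
  exacts [F.card_lt, T.card_lt]

lemma connected (h : PStep Γ Δ) (hc : Γ.Connected) : Δ.Connected := by
  rcases h with ⟨F, -⟩ | ⟨T, -⟩
  exacts [F.f.connected_of_surjective hc F.surjV, T.connected hc]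

lemma pi1S_eq (h : PStep Γ Δ) : Δ.pi1S = Γ.pi1S := by
  rcases h with ⟨F, hb⟩ | ⟨T, -, hb⟩
  · rw [PLGraph.pi1S, ← hb, F.pi1_eq]; rfl
  · rw [PLGraph.pi1S, T.pi1_eq, hb]; rfl

end PStep

namespace PLGraph

variable {X : Type} {Γ Δ Δ' : PLGraph X}

lemma folded_of_terminal (hterm : ∀ Ξ, ¬ PStep Γ Ξ) : Γ.toLGraph.Folded := by
  intro e₁ e₂ hinit hlab
  by_contra hne
  let F := LGraph.foldStep hne hinit hlab
  exact hterm ⟨_, F.f.mapV Γ.base⟩ (Or.inl ⟨F, rfl⟩)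

lemma exists_ne_bar_of_terminal (hterm : ∀ Ξ, ¬ PStep Γ Ξ) {g : Γ.E}
    (hg : Γ.term g ≠ Γ.base) : ∃ g', Γ.init g' = Γ.term g ∧ g' ≠ Γ.bar g := by
  by_contra! hdeg
  exact hterm ⟨Γ.trim _ _ hdeg, ⟨Γ.base, hg.symm⟩⟩
    (Or.inr ⟨LGraph.trimStep rfl hdeg, hg, rfl⟩)

/-- Junk value `0` when the base point cannot be reached from `u`. -/
noncomputable def dist (Γ : PLGraph X) (u : Γ.V) : ℕ :=
  sInf {n | ∃ p, Γ.chain u p ∧ Γ.endOf u p = Γ.base ∧ p.length = n}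

lemma dist_le {u : Γ.V} {p : List Γ.E} (hp : Γ.chain u p) (he : Γ.endOf u p = Γ.base) :
    Γ.dist u ≤ p.length :=
  Nat.sInf_le ⟨p, hp, he, rfl⟩

lemma dist_base : Γ.dist Γ.base = 0 :=
  Nat.eq_zero_of_le_zero (dist_le (p := []) trivial rfl)

lemma exists_geodesic (hc : Γ.Connected) (u : Γ.V) :
    ∃ p, Γ.chain u p ∧ Γ.endOf u p = Γ.base ∧ Γ.Reduced p ∧ p.length = Γ.dist u := by
  obtain ⟨p, hp, hpe⟩ := hc u Γ.base
  obtain ⟨p, hp, hpe, hpl⟩ := Nat.sInf_mem (s := {n | ∃ p, Γ.chain u p ∧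
    Γ.endOf u p = Γ.base ∧ p.length = n}) ⟨_, p, hp, hpe, rfl⟩
  obtain ⟨q, hq, hqe, hqr, -, hql⟩ := LGraph.exists_reduced hp
  exact ⟨q, hq, hqe.trans hpe, hqr, le_antisymm (hql.trans_eq hpl) (dist_le hq (hqe.trans hpe))⟩

def ExtendsToBase (Γ : PLGraph X) (g : Γ.E) : Prop :=
  ∃ r, Γ.chain (Γ.term g) r ∧ Γ.endOf (Γ.term g) r = Γ.base ∧ Γ.Reduced (g :: r)

/-- A geodesic from `τ(g)` either does not start with `ḡ`, or does and then shows that `g`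
points away from the base point. -/
lemma extendsToBase_or_dist_lt (hc : Γ.Connected) (g : Γ.E) :
    Γ.ExtendsToBase g ∨ Γ.dist (Γ.init g) < Γ.dist (Γ.term g) := by
  obtain ⟨_ | ⟨h, t⟩, hp, hpe, hpr, hpl⟩ := exists_geodesic hc (Γ.term g)
  · exact Or.inl ⟨[], trivial, hpe, List.isChain_singleton g⟩
  by_cases hh : h = Γ.bar g
  · subst hh
    right
    have := dist_le (u := Γ.init g) (by simpa using hp.2) (by simpa using hpe)
    simp only [List.length_cons] at hpl
    omega
  · exact Or.inl ⟨h :: t, hp, hpe, LGraph.reduced_cons.mpr ⟨by simpa using hh, hpr⟩⟩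

/-- In a finite graph without foldings or trimmings, walk away from the base point until a
geodesic back does not backtrack; the distance to the base bounds the length of the walk. -/
lemma extendsToBase_of_terminal [Finite Γ.V] (hc : Γ.Connected) (hterm : ∀ Ξ, ¬ PStep Γ Ξ)
    (g : Γ.E) : Γ.ExtendsToBase g := by
  obtain ⟨M, hM⟩ := (Set.finite_range Γ.dist).bddAbove
  induction g using (measure fun g => M - Γ.dist (Γ.term g)).wf.induction with
  | _ g ih =>
  rcases extendsToBase_or_dist_lt hc g with h | hlt
  · exact h
  have hg : Γ.term g ≠ Γ.base := fun h => by rw [h, dist_base] at hlt; omega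
  obtain ⟨g', hg'i, hg'ne⟩ := exists_ne_bar_of_terminal hterm hg
  obtain ⟨r, hr, hre, hrr⟩ : Γ.ExtendsToBase g' := by
    refine (extendsToBase_or_dist_lt hc g').elim id fun hlt' => ih g' ?_
    have := hM ⟨Γ.term g', rfl⟩
    rw [hg'i] at hlt'
    show M - Γ.dist (Γ.term g') < M - Γ.dist (Γ.term g)
    omega
  exact ⟨g' :: r, ⟨hg'i, hr⟩, hre, LGraph.reduced_cons.mpr ⟨by simpa using hg'ne, hrr⟩⟩

/-- Gluing the reversed extension of `ē` to the extension of `e` gives a reduced loop through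
`e`. -/
lemma isCore_of_terminal [Finite Γ.V] (hc : Γ.Connected) (hterm : ∀ Ξ, ¬ PStep Γ Ξ) :
    Γ.IsCore := by
  refine ⟨folded_of_terminal hterm, hc, fun e => ?_⟩
  obtain ⟨r₁, hr₁, hr₁e, hr₁r⟩ := extendsToBase_of_terminal hc hterm (Γ.bar e)
  obtain ⟨r₂, hr₂, hr₂e, hr₂r⟩ := extendsToBase_of_terminal hc hterm e
  have hq : Γ.chain (Γ.term e) (Γ.bar e :: r₁) := ⟨rfl, hr₁⟩
  obtain ⟨hb, hbe⟩ := LGraph.chain_barRev hq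
  rw [LGraph.endOf_cons, hr₁e] at hb hbe
  have hrev : Γ.barRev (Γ.bar e :: r₁) = Γ.barRev r₁ ++ [e] := by simp [Γ.bar_bar]
  rw [hrev] at hb hbe
  refine ⟨Γ.barRev r₁ ++ [e] ++ r₂, LGraph.chain_append.mpr ⟨hb, hbe ▸ hr₂⟩,
    by rw [LGraph.endOf_append, hbe, hr₂e], ?_, by simp⟩
  exact List.IsChain.append_overlap (hrev ▸ hr₁r.barRev) hr₂r (List.cons_ne_nil _ _)

def Corr (Δ Δ' : PLGraph X) (v : Δ.V) (w : Δ'.V) : Prop :=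
  ∃ p q, Δ.chain Δ.base p ∧ Δ.endOf Δ.base p = v ∧ Δ'.chain Δ'.base q ∧
    Δ'.endOf Δ'.base q = w ∧ Δ.pathLabel p = Δ'.pathLabel q

lemma corr_base : Corr Δ Δ' Δ.base Δ'.base :=
  ⟨[], [], trivial, rfl, trivial, rfl, rfl⟩

lemma corr_endOf_of_map_lab_eq {p : List Δ.E} {q : List Δ'.E} (hp : Δ.chain Δ.base p)
    (hq : Δ'.chain Δ'.base q) (h : p.map Δ.lab = q.map Δ'.lab) :
    Corr Δ Δ' (Δ.endOf Δ.base p) (Δ'.endOf Δ'.base q) :=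
  ⟨p, q, hp, rfl, hq, rfl, by rw [LGraph.pathLabel_eq_mk, LGraph.pathLabel_eq_mk, h]⟩

/-- If `p, p'` reach `v` and `q, q'` have the same labels, then `p p'⁻¹` is a loop, whose label
is read by a loop `K` of `Δ'`; `K q'` and `q` then have the same label, hence the same end. -/
lemma corr_unique (hF' : Δ'.Folded) (hπ : Δ.pi1S ⊆ Δ'.pi1S) {v : Δ.V} {w w' : Δ'.V}
    (h : Corr Δ Δ' v w) (h' : Corr Δ Δ' v w') : w = w' := by
  obtain ⟨p, q, hp, rfl, hq, rfl, hl⟩ := h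
  obtain ⟨p', q', hp', hpe', hq', rfl, hl'⟩ := h'
  obtain ⟨hb, hbe⟩ := LGraph.chain_barRev hp'
  rw [hpe'] at hb hbe
  obtain ⟨K, hK, hKe, hKl⟩ := hπ ⟨p ++ Δ.barRev p', LGraph.chain_append.mpr ⟨hp, hb⟩,
    by rw [LGraph.endOf_append, hbe], rfl⟩
  have hKq' : Δ'.chain Δ'.base (K ++ q') := LGraph.chain_append.mpr ⟨hK, by rwa [hKe]⟩
  rw [hF'.endOf_eq_of_pathLabel_eq hq hKq' (by simp [hKl, hl, hl']), LGraph.endOf_append, hKe]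

/-- The label of `C` is also that of a reduced loop of `Δ'`, and in a folded graph the word
read along a reduced path is the reduced word of its label. -/
lemma exists_chain_map_lab_eq (hΔ : Δ.IsCore) (hF' : Δ'.Folded) (hπ : Δ.pi1S ⊆ Δ'.pi1S)
    {C : List Δ.E} (hC : Δ.chain Δ.base C) (hCe : Δ.endOf Δ.base C = Δ.base)
    (hCr : Δ.Reduced C) : ∃ C', Δ'.chain Δ'.base C' ∧ C'.map Δ'.lab = C.map Δ.lab := by
  classical
  obtain ⟨K, hK, -, hKl⟩ := hπ ⟨C, hC, hCe, rfl⟩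
  obtain ⟨C', hC', -, hC'r, hC'l, -⟩ := LGraph.exists_reduced hK
  refine ⟨C', hC', ?_⟩
  rw [hF'.map_lab_eq_toWord hC' hC'r, hΔ.1.map_lab_eq_toWord hC hCr, hC'l, hKl]

/-- Put `d` on a reduced loop `C`; the edge at the same position of the path of `Δ'` reading `C`
is the required `x`. -/
lemma exists_edge_of_corr (hΔ : Δ.IsCore) (hF' : Δ'.Folded) (hπ : Δ.pi1S ⊆ Δ'.pi1S)
    {v : Δ.V} {w : Δ'.V} (hvw : Corr Δ Δ' v w) {d : Δ.E} (hd : Δ.init d = v) :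
    ∃ x, Δ'.init x = w ∧ Δ'.lab x = Δ.lab d ∧ Corr Δ Δ' (Δ.term d) (Δ'.term x) := by
  obtain ⟨C, hC, hCe, hCr, hdC⟩ := hΔ.2.2 d
  obtain ⟨C₁, C₂, rfl⟩ := List.append_of_mem hdC
  obtain ⟨C', hC', hw⟩ := exists_chain_map_lab_eq hΔ hF' hπ hC hCe hCr
  rw [List.map_append, List.map_cons, List.map_eq_append_iff] at hw
  obtain ⟨C'₁, D, rfl, hw₁, hw₂⟩ := hw
  obtain ⟨x, C'₂, rfl, hx, -⟩ := List.map_eq_cons_iff.mp hw₂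
  obtain ⟨hC₁, hd₁, -⟩ := LGraph.chain_append.mp hC
  obtain ⟨hC'₁, hx₁, -⟩ := LGraph.chain_append.mp hC'
  have hw' : w = Δ'.endOf Δ'.base C'₁ :=
    corr_unique hF' hπ hvw (hd ▸ hd₁ ▸ corr_endOf_of_map_lab_eq hC₁ hC'₁ hw₁.symm)
  refine ⟨x, hx₁.trans hw'.symm, hx, ?_⟩
  have h := corr_endOf_of_map_lab_eq (p := C₁ ++ [d]) (q := C'₁ ++ [x])
    (LGraph.chain_append.mpr ⟨hC₁, hd₁, trivial⟩)
    (LGraph.chain_append.mpr ⟨hC'₁, hx₁, trivial⟩)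
    (by simp [hw₁, hx])
  simpa [LGraph.endOf_append] using h

/-- `v` goes to the end of a path of `Δ'` with the label of a path to `v`; the core property
provides the edges. -/
lemma exists_pHom (hΔ : Δ.IsCore) (hF' : Δ'.Folded) (hπ : Δ.pi1S ⊆ Δ'.pi1S) :
    Nonempty (PHom Δ Δ') := by
  have hcorr : ∀ v, ∃ w, Corr Δ Δ' v w := by
    intro v
    obtain ⟨p, hp, rfl⟩ := hΔ.2.1 Δ.base v
    induction p using List.reverseRecOn with
    | nil => exact ⟨_, corr_base⟩
    | append_singleton p d ih =>
      obtain ⟨hp, hd, -⟩ := LGraph.chain_append.mp hp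
      obtain ⟨w, hw⟩ := ih hp
      obtain ⟨x, -, -, hx⟩ := exists_edge_of_corr hΔ hF' hπ hw hd
      exact ⟨_, by simpa [LGraph.endOf_append] using hx⟩
  choose mV hmV using hcorr
  choose mE hinit hlab hterm using fun d => exists_edge_of_corr hΔ hF' hπ (hmV (Δ.init d)) rfl
  have hterm' : ∀ d, Δ'.term (mE d) = mV (Δ.term d) :=
    fun d => corr_unique hF' hπ (hterm d) (hmV _)
  refine ⟨⟨⟨mV, mE, hinit, fun d => hF' _ _ ?_ ?_, hlab⟩,
    corr_unique hF' hπ (hmV _) corr_base⟩⟩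
  · rw [hinit]
    exact hterm' d
  · rw [Δ'.lab_bar, hlab, hlab, Δ.lab_bar]

lemma invariants_of_reflTransGen (h : Relation.ReflTransGen PStep Γ Δ) (hV : Finite Γ.V)
    (hc : Γ.Connected) : Finite Δ.V ∧ Δ.Connected ∧ Δ.pi1S = Γ.pi1S := by
  induction h with
  | refl => exact ⟨hV, hc, rfl⟩
  | tail _ hstep ih =>
    obtain ⟨hV, hc, hπ⟩ := ih
    exact ⟨hstep.finite_V, hstep.connected hc, hstep.pi1S_eq.trans hπ⟩

lemma not_exists_pStep_seq (hE : Finite Γ.E) :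
    ¬ ∃ g : ℕ → PLGraph X, g 0 = Γ ∧ ∀ n, PStep (g n) (g (n + 1)) := by
  rintro ⟨g, rfl, hg⟩
  have hfin : ∀ n, Finite (g n).E := fun n => by
    induction n with
    | zero => exact hE
    | succ n ih => exact (hg n).finite_E
  obtain ⟨n, hn⟩ := WellFounded.not_rel_apply_succ (r := (· < ·)) fun n => Nat.card (g n).E
  exact hn (hg n).card_lt

lemma exists_terminal (hE : Finite Γ.E) :
    ∃ Δ, Relation.ReflTransGen PStep Γ Δ ∧ ∀ Ξ, ¬ PStep Δ Ξ := by
  obtain ⟨Δ, ⟨hΔ, hfin⟩, hmin⟩ := (measure fun Δ : PLGraph X => Nat.card Δ.E).wf.has_min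
    {Δ | Relation.ReflTransGen PStep Γ Δ ∧ Finite Δ.E} ⟨Γ, .refl, hE⟩
  exact ⟨Δ, hΔ, fun Ξ hΞ => hmin Ξ ⟨hΔ.tail hΞ, hΞ.finite_E⟩ hΞ.card_lt⟩

lemma exists_bijective_pHom (hΔ : Δ.IsCore) (hΔ' : Δ'.IsCore) (hπ : Δ.pi1S = Δ'.pi1S) :
    ∃ h : PHom Δ Δ', Function.Bijective h.mapV ∧ Function.Bijective h.mapE := by
  obtain ⟨f⟩ := exists_pHom hΔ hΔ'.1 hπ.subset
  obtain ⟨g⟩ := exists_pHom hΔ' hΔ.1 hπ.symm.subset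
  exact ⟨f, PHom.bijective_of_folded hΔ.2.1 hΔ.1 hΔ'.2.1 hΔ'.1 f g⟩

end PLGraph

/-- For a finite connected pointed labeled graph, folding and
trimming terminate (no infinite chain of steps), some terminal graph is
reached, every terminal graph is a folded core graph, and the terminal graph
is independent (up to isomorphism) of the order of operations. -/
theorem stmt18 {X : Type} (Γ : PLGraph X) (hE : Finite Γ.E) (hV : Finite Γ.V)
    (hc : Γ.toLGraph.Connected) :
    (¬ ∃ g : ℕ → PLGraph X, g 0 = Γ ∧ ∀ n, PStep (g n) (g (n + 1))) ∧
    (∃ Δ, Relation.ReflTransGen PStep Γ Δ ∧ (∀ Ξ, ¬ PStep Δ Ξ) ∧ Δ.IsCore) ∧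
    (∀ Δ Δ', Relation.ReflTransGen PStep Γ Δ → Relation.ReflTransGen PStep Γ Δ' →
      (∀ Ξ, ¬ PStep Δ Ξ) → (∀ Ξ, ¬ PStep Δ' Ξ) →
      ∃ h : PHom Δ Δ', Function.Bijective h.mapV ∧ Function.Bijective h.mapE) := by
  refine ⟨PLGraph.not_exists_pStep_seq hE, ?_, fun Δ Δ' hΔ hΔ' ht ht' => ?_⟩
  · obtain ⟨Δ, hΔ, ht⟩ := PLGraph.exists_terminal hE
    obtain ⟨hV', hc', -⟩ := PLGraph.invariants_of_reflTransGen hΔ hV hc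
    exact ⟨Δ, hΔ, ht, PLGraph.isCore_of_terminal hc' ht⟩
  · obtain ⟨hV₁, hc₁, hπ₁⟩ := PLGraph.invariants_of_reflTransGen hΔ hV hc
    obtain ⟨hV₂, hc₂, hπ₂⟩ := PLGraph.invariants_of_reflTransGen hΔ' hV hc
    exact PLGraph.exists_bijective_pHom (PLGraph.isCore_of_terminal hc₁ ht)
      (PLGraph.isCore_of_terminal hc₂ ht') (hπ₁.trans hπ₂.symm)
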